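/- arXiv:2301.03197 — 6 statements merged into one kernel-verified Lean document; each statement's English description precedes it below -/
import Mathlib

section
/- Let Ω, Ω̃ ⊆ ℝ² be open sets, φ : Ω → Ω̃ a C¹ diffeomorphism with everywhere positive Jacobian determinant, and A : Ω → (real symmetric 2×2 matrices) agreed with φ. Let r ≥ 2 and suppose C > 0 is such that for every continuously differentiable g : ℝ² → ℝ with compact support in Ω̃, (∫_{Ω̃} |g(w)|^r dw)^{1/r} ≤ C (∫_{Ω̃} |∇g(w)|² dw)^{1/2}. Then for every continuously differentiable f : ℝ² → ℝ with compact support in Ω, the weighted Sobolev–Poincaré inequality (∫_Ω |f(z)|^r · det Dφ(z) dz)^{1/r} ≤ C (∫_Ω ⟨A(z)∇f(z), ∇f(z)⟩ dz)^{1/2} holds. -/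
/-!
Transplant `f` to `g := f ∘ ψ` on `Ω'` (zero elsewhere). The change of variables `w = φ z`
turns `∫ |g|^r` into `∫ |f|^r det Dφ`. By the chain rule `∇f = Dφᵀ (∇g ∘ φ)`, so
`⟨A ∇f, ∇f⟩ = ⟨Dφ A Dφᵀ (∇g ∘ φ), ∇g ∘ φ⟩ = det Dφ · |∇g ∘ φ|²` for agreed `A`, and the same
change of variables turns `∫ |∇g|²` into the weighted energy of `f`.
-/

open MeasureTheory Set Matrix

namespace Matrix

variable {n : Type*} [Fintype n] [DecidableEq n]

theorem det_toEuclideanCLM (M : Matrix n n ℝ) :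
    (toEuclideanCLM (𝕜 := ℝ) M).det = M.det := by
  rw [ContinuousLinearMap.det, coe_toEuclideanCLM_eq_toEuclideanLin, toEuclideanLin,
    LinearMap.det_toLpLin]

theorem toEuclideanCLM_transpose (M : Matrix n n ℝ) :
    toEuclideanCLM (𝕜 := ℝ) Mᵀ = ContinuousLinearMap.adjoint (toEuclideanCLM (𝕜 := ℝ) M) := by
  rw [← ContinuousLinearMap.star_eq_adjoint, ← map_star]
  rfl

theorem inner_toEuclideanCLM_transpose_of_mul_mul_transpose_eq {A M : Matrix n n ℝ} {c : ℝ}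
    (h : M * A * Mᵀ = c • 1) (u : EuclideanSpace ℝ n) :
    inner ℝ (toEuclideanCLM (𝕜 := ℝ) A (toEuclideanCLM (𝕜 := ℝ) Mᵀ u))
      (toEuclideanCLM (𝕜 := ℝ) Mᵀ u) = c * ‖u‖ ^ 2 := by
  have hMAMt : toEuclideanCLM (𝕜 := ℝ) M (toEuclideanCLM (𝕜 := ℝ) A
      (toEuclideanCLM (𝕜 := ℝ) Mᵀ u)) = c • u := by
    calc _ = toEuclideanCLM (𝕜 := ℝ) (M * A * Mᵀ) u := by rw [_root_.map_mul, _root_.map_mul]; rfl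
      _ = c • u := by rw [h, _root_.map_smul, _root_.map_one]; rfl
  rw [toEuclideanCLM_transpose, ContinuousLinearMap.adjoint_inner_right,
    ← toEuclideanCLM_transpose, hMAMt, real_inner_smul_left, real_inner_self_eq_norm_sq]

end Matrix

theorem HasFDerivAt.gradient_comp_toEuclideanCLM {n : Type*} [Fintype n] [DecidableEq n]
    {g : EuclideanSpace ℝ n → ℝ} {φ : EuclideanSpace ℝ n → EuclideanSpace ℝ n}
    {M : Matrix n n ℝ} {z : EuclideanSpace ℝ n}
    (hφ : HasFDerivAt φ (toEuclideanCLM (𝕜 := ℝ) M) z) (hg : DifferentiableAt ℝ g (φ z)) :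
    gradient (g ∘ φ) z = toEuclideanCLM (𝕜 := ℝ) Mᵀ (gradient g (φ z)) := by
  refine ext_inner_right ℝ fun v => ?_
  rw [inner_gradient_left, (hg.hasFDerivAt.comp z hφ).fderiv, ContinuousLinearMap.comp_apply,
    ← inner_gradient_left, toEuclideanCLM_transpose, ContinuousLinearMap.adjoint_inner_left]

theorem setIntegral_image_eq_setIntegral_det_mul {n : Type*} [Fintype n] [DecidableEq n]
    {Ω : Set (EuclideanSpace ℝ n)} (hΩ : MeasurableSet Ω)
    {φ : EuclideanSpace ℝ n → EuclideanSpace ℝ n} {J : EuclideanSpace ℝ n → Matrix n n ℝ}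
    (hinj : InjOn φ Ω) (hJ : ∀ z ∈ Ω, HasFDerivAt φ (toEuclideanCLM (𝕜 := ℝ) (J z)) z)
    (hpos : ∀ z ∈ Ω, 0 < (J z).det) (F : EuclideanSpace ℝ n → ℝ) :
    ∫ w in φ '' Ω, F w = ∫ z in Ω, (J z).det * F (φ z) := by
  rw [integral_image_eq_integral_abs_det_fderiv_smul volume hΩ
    (fun z hz => (hJ z hz).hasFDerivWithinAt) hinj F]
  refine setIntegral_congr_fun hΩ fun z hz => ?_
  rw [det_toEuclideanCLM, abs_of_pos (hpos z hz), smul_eq_mul]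

theorem ContDiffOn.contDiff_of_support_subset {F G : Type*} [NormedAddCommGroup F]
    [NormedSpace ℝ F] [NormedAddCommGroup G] [NormedSpace ℝ G] {n : WithTop ℕ∞} {g : F → G}
    {U K : Set F} (hg : ContDiffOn ℝ n g U) (hU : IsOpen U) (hK : IsClosed K) (hKU : K ⊆ U)
    (hsupp : Function.support g ⊆ K) : ContDiff ℝ n g := by
  refine contDiff_iff_contDiffAt.mpr fun w => ?_
  by_cases hw : w ∈ K
  · exact hg.contDiffAt (hU.mem_nhds (hKU hw))
  · refine (contDiffAt_const (c := (0 : G))).congr_of_eventuallyEq ?_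
    filter_upwards [hK.isOpen_compl.mem_nhds hw] with x hx
    exact Function.notMem_support.mp fun h => hx (hsupp h)

theorem support_indicator_comp_subset_image {E F G : Type*} [Zero G] {Ω : Set E} {Ω' : Set F}
    {φ : E → F} {ψ : F → E} (hsurj : SurjOn φ Ω Ω') (hinv : ∀ z ∈ Ω, ψ (φ z) = z)
    (f : E → G) : Function.support (Ω'.indicator (f ∘ ψ)) ⊆ φ '' Function.support f := by
  intro w hw
  obtain ⟨hwΩ', hfw⟩ := Set.support_indicator.subset hw
  obtain ⟨z, hz, rfl⟩ := hsurj hwΩ'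
  exact ⟨z, by simpa [hinv z hz] using hfw, rfl⟩

theorem contDiff_indicator_comp {E F G : Type*} [NormedAddCommGroup E] [NormedSpace ℝ E]
    [NormedAddCommGroup F] [NormedSpace ℝ F] [NormedAddCommGroup G] [NormedSpace ℝ G]
    {Ω : Set E} {Ω' : Set F} {φ : E → F} {ψ : F → E} {n : WithTop ℕ∞} {f : E → G}
    (hΩ' : IsOpen Ω') (hmaps : MapsTo φ Ω Ω') (hsurj : SurjOn φ Ω Ω')
    (hinv : ∀ z ∈ Ω, ψ (φ z) = z) (hφ : ContinuousOn φ Ω) (hψ : ContDiffOn ℝ n ψ Ω')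
    (hf : ContDiff ℝ n f) (hfc : HasCompactSupport f) (hfs : tsupport f ⊆ Ω) :
    ContDiff ℝ n (Ω'.indicator (f ∘ ψ)) ∧ HasCompactSupport (Ω'.indicator (f ∘ ψ)) ∧
      tsupport (Ω'.indicator (f ∘ ψ)) ⊆ Ω' := by
  have hK : IsCompact (φ '' tsupport f) := hfc.image_of_continuousOn (hφ.mono hfs)
  have hKΩ' : φ '' tsupport f ⊆ Ω' := (hmaps.mono_left hfs).image_subset
  have hsupp : Function.support (Ω'.indicator (f ∘ ψ)) ⊆ φ '' tsupport f :=
    (support_indicator_comp_subset_image hsurj hinv f).trans (image_mono (subset_tsupport f))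
  have hgΩ' : ContDiffOn ℝ n (Ω'.indicator (f ∘ ψ)) Ω' :=
    (hf.comp_contDiffOn hψ).congr fun w hw => indicator_of_mem hw _
  exact ⟨hgΩ'.contDiff_of_support_subset hΩ' hK.isClosed hKΩ' hsupp,
    .of_support_subset_isCompact hK hsupp, (closure_minimal hsupp hK.isClosed).trans hKΩ'⟩

theorem stmt5_general (Ω Ω' : Set (EuclideanSpace ℝ (Fin 2))) (hΩ : IsOpen Ω) (hΩ' : IsOpen Ω')
    (φ ψ : EuclideanSpace ℝ (Fin 2) → EuclideanSpace ℝ (Fin 2))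
    (hbij : Set.BijOn φ Ω Ω') (hinv : ∀ z ∈ Ω, ψ (φ z) = z)
    (hψ : ContDiffOn ℝ 1 ψ Ω')
    (J : EuclideanSpace ℝ (Fin 2) → Matrix (Fin 2) (Fin 2) ℝ)
    (hJ : ∀ z ∈ Ω, HasFDerivAt φ (Matrix.toEuclideanCLM (𝕜 := ℝ) (J z)) z)
    (hpos : ∀ z ∈ Ω, 0 < (J z).det)
    (A : EuclideanSpace ℝ (Fin 2) → Matrix (Fin 2) (Fin 2) ℝ)
    (hagree : ∀ z ∈ Ω, J z * A z * (J z)ᵀ = (J z).det • (1 : Matrix (Fin 2) (Fin 2) ℝ))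
    (r : ℝ) (C : ℝ)
    (hSP : ∀ g : EuclideanSpace ℝ (Fin 2) → ℝ,
      ContDiff ℝ 1 g → HasCompactSupport g → tsupport g ⊆ Ω' →
      (∫ w in Ω', |g w| ^ r) ^ (1 / r) ≤
        C * (∫ w in Ω', ‖gradient g w‖ ^ 2) ^ ((1 : ℝ) / 2))
    (f : EuclideanSpace ℝ (Fin 2) → ℝ)
    (hf : ContDiff ℝ 1 f) (hfc : HasCompactSupport f) (hfs : tsupport f ⊆ Ω) :
    (∫ z in Ω, |f z| ^ r * (J z).det) ^ (1 / r) ≤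
      C * (∫ z in Ω, (inner ℝ (Matrix.toEuclideanCLM (𝕜 := ℝ) (A z) (gradient f z))
        (gradient f z) : ℝ)) ^ ((1 : ℝ) / 2) := by
  set g := Ω'.indicator (f ∘ ψ)
  obtain ⟨hg, hgc, hgs⟩ := contDiff_indicator_comp hΩ' hbij.mapsTo hbij.surjOn hinv
    (fun z hz => (hJ z hz).continuousAt.continuousWithinAt) hψ hf hfc hfs
  have hgφ : ∀ z ∈ Ω, g (φ z) = f z := fun z hz => by
    simp [g, indicator_of_mem (hbij.mapsTo hz), hinv z hz]
  have hgrad (z) (hz : z ∈ Ω) :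
      gradient f z = toEuclideanCLM (𝕜 := ℝ) (J z)ᵀ (gradient g (φ z)) := by
    have hfg : g ∘ φ =ᶠ[nhds z] f := Filter.eventuallyEq_of_mem (hΩ.mem_nhds hz) hgφ
    rw [← hfg.gradient_eq,
      (hJ z hz).gradient_comp_toEuclideanCLM (hg.differentiable one_ne_zero _)]
  have hcov (F : EuclideanSpace ℝ (Fin 2) → ℝ) :
      ∫ w in Ω', F w = ∫ z in Ω, (J z).det * F (φ z) := by
    rw [← hbij.image_eq,
      setIntegral_image_eq_setIntegral_det_mul hΩ.measurableSet hbij.injOn hJ hpos]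
  have hvol : ∫ w in Ω', |g w| ^ r = ∫ z in Ω, |f z| ^ r * (J z).det := by
    rw [hcov]
    refine setIntegral_congr_fun hΩ.measurableSet fun z hz => ?_
    rw [hgφ z hz, mul_comm]
  have henergy : ∫ w in Ω', ‖gradient g w‖ ^ 2 = ∫ z in Ω,
      (inner ℝ (toEuclideanCLM (𝕜 := ℝ) (A z) (gradient f z)) (gradient f z) : ℝ) := by
    rw [hcov]
    refine setIntegral_congr_fun hΩ.measurableSet fun z hz => ?_
    rw [hgrad z hz, inner_toEuclideanCLM_transpose_of_mul_mul_transpose_eq (hagree z hz)]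
  rw [← hvol, ← henergy]
  exact hSP g hg hgc hgs

/-- transfer of the Sobolev–Poincaré inequality: if the constant `C` works for
the non-weighted inequality on `Ω̃`, then the weighted inequality with weight `det Dφ` and the
energy `∫⟨A∇f,∇f⟩` holds on `Ω` with the same constant. -/
theorem stmt5 (Ω Ω' : Set (EuclideanSpace ℝ (Fin 2))) (hΩ : IsOpen Ω) (hΩ' : IsOpen Ω')
    (φ ψ : EuclideanSpace ℝ (Fin 2) → EuclideanSpace ℝ (Fin 2))
    (hbij : Set.BijOn φ Ω Ω') (hinv : ∀ z ∈ Ω, ψ (φ z) = z)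
    (hφ : ContDiffOn ℝ 1 φ Ω) (hψ : ContDiffOn ℝ 1 ψ Ω')
    (J : EuclideanSpace ℝ (Fin 2) → Matrix (Fin 2) (Fin 2) ℝ)
    (hJ : ∀ z ∈ Ω, HasFDerivAt φ (Matrix.toEuclideanCLM (𝕜 := ℝ) (J z)) z)
    (hpos : ∀ z ∈ Ω, 0 < (J z).det)
    (A : EuclideanSpace ℝ (Fin 2) → Matrix (Fin 2) (Fin 2) ℝ)
    (hsym : ∀ z ∈ Ω, (A z).IsSymm)
    (hagree : ∀ z ∈ Ω, J z * A z * (J z)ᵀ = (J z).det • (1 : Matrix (Fin 2) (Fin 2) ℝ))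
    (r : ℝ) (hr : 2 ≤ r) (C : ℝ) (hC : 0 < C)
    (hSP : ∀ g : EuclideanSpace ℝ (Fin 2) → ℝ,
      ContDiff ℝ 1 g → HasCompactSupport g → tsupport g ⊆ Ω' →
      (∫ w in Ω', |g w| ^ r) ^ (1 / r) ≤
        C * (∫ w in Ω', ‖gradient g w‖ ^ 2) ^ ((1 : ℝ) / 2))
    (f : EuclideanSpace ℝ (Fin 2) → ℝ)
    (hf : ContDiff ℝ 1 f) (hfc : HasCompactSupport f) (hfs : tsupport f ⊆ Ω) :
    (∫ z in Ω, |f z| ^ r * (J z).det) ^ (1 / r) ≤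
      C * (∫ z in Ω, (inner ℝ (Matrix.toEuclideanCLM (𝕜 := ℝ) (A z) (gradient f z))
        (gradient f z) : ℝ)) ^ ((1 : ℝ) / 2) :=
  stmt5_general Ω Ω' hΩ hΩ' φ ψ hbij hinv hψ J hJ hpos A hagree r C hSP f hf hfc hfs
end

section
/- Let Ω, Ω̃ ⊆ ℝ² be open sets, φ : Ω → Ω̃ a C¹ diffeomorphism with everywhere positive Jacobian determinant, and A : Ω → (real symmetric 2×2 matrices) agreed with φ. Suppose M > 0 satisfies det Dφ(z) ≥ 1/M for every z ∈ Ω (equivalently |det D(φ⁻¹)(w)| ≤ M on Ω̃), and suppose λ > 0 is such that for every continuously differentiable g : ℝ² → ℝ with compact support in Ω̃, ∫_{Ω̃} |g(w)|² dw ≤ (1/λ) ∫_{Ω̃} |∇g(w)|² dw. Then for every continuously differentiable f : ℝ² → ℝ with compact support in Ω, ∫_Ω |f(z)|² dz ≤ (M/λ) ∫_Ω ⟨A(z)∇f(z), ∇f(z)⟩ dz. -/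
/-!
Transport `f` to `g = f ∘ φ⁻¹` on `Ω̃`. By the chain rule `∇g(φ z) = Dφ(z)⁻ᵀ ∇f(z)`, and the
agreement condition says `A = det Dφ · Dφ⁻¹ Dφ⁻ᵀ`, so `det Dφ · |∇g ∘ φ|² = ⟨A∇f, ∇f⟩`.
Changing variables `w = φ z`, the Poincaré inequality for `g` reads
`∫_Ω det Dφ · |f|² ≤ (1/λ) ∫_Ω ⟨A∇f, ∇f⟩`, and `det Dφ ≥ 1/M` gives the claim.
-/

open MeasureTheory Set Matrix Filter Topology
open scoped RealInnerProductSpace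

theorem tsupport_indicator_subset_of_eqOn_zero {X G : Type*} [TopologicalSpace X] [Zero G]
    {U K : Set X} {F : X → G} (hK : IsClosed K) (h0 : EqOn F 0 (U \ K)) :
    tsupport (U.indicator F) ⊆ K :=
  closure_minimal (Function.support_subset_iff'.2 fun _ hxK =>
    indicator_apply_eq_zero.2 fun hxU => h0 ⟨hxU, hxK⟩) hK

theorem ContDiffOn.contDiff_indicator {𝕜 E G : Type*} [NontriviallyNormedField 𝕜]
    [NormedAddCommGroup E] [NormedSpace 𝕜 E] [NormedAddCommGroup G] [NormedSpace 𝕜 G]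
    {n : WithTop ℕ∞} {U K : Set E} {F : E → G} (hF : ContDiffOn 𝕜 n F U) (hU : IsOpen U)
    (hK : IsClosed K) (hKU : K ⊆ U) (h0 : EqOn F 0 (U \ K)) :
    ContDiff 𝕜 n (U.indicator F) := by
  refine contDiff_iff_contDiffAt.2 fun x => ?_
  by_cases hx : x ∈ U
  · exact (hF.contDiffAt (hU.mem_nhds hx)).congr_of_eventuallyEq
      (eventually_of_mem (hU.mem_nhds hx) fun y hy => indicator_of_mem hy F)
  · refine (contDiffAt_const (c := (0 : G))).congr_of_eventuallyEq ?_
    filter_upwards [hK.isOpen_compl.mem_nhds fun hxK => hx (hKU hxK)] with y hy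
    exact indicator_apply_eq_zero.2 fun hyU => h0 ⟨hyU, hy⟩

theorem exists_contDiff_hasCompactSupport_eqOn_comp {E F : Type*}
    [NormedAddCommGroup E] [NormedSpace ℝ E] [NormedAddCommGroup F] [NormedSpace ℝ F]
    {n : WithTop ℕ∞} {Ω : Set E} {Ω' : Set F}
    {φ : E → F} {ψ : F → E} {f : E → ℝ} (hΩ' : IsOpen Ω') (hbij : BijOn φ Ω Ω')
    (hinv : ∀ z ∈ Ω, ψ (φ z) = z) (hφ : ContinuousOn φ Ω) (hψ : ContDiffOn ℝ n ψ Ω')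
    (hf : ContDiff ℝ n f) (hfc : HasCompactSupport f) (hfs : tsupport f ⊆ Ω) :
    ∃ g : F → ℝ, ContDiff ℝ n g ∧ HasCompactSupport g ∧ tsupport g ⊆ Ω' ∧ EqOn g (f ∘ ψ) Ω' := by
  have hK : IsCompact (φ '' tsupport f) := hfc.isCompact.image_of_continuousOn (hφ.mono hfs)
  have hKΩ' : φ '' tsupport f ⊆ Ω' := hbij.image_eq ▸ image_mono hfs
  have h0 : EqOn (f ∘ ψ) 0 (Ω' \ φ '' tsupport f) := by
    rintro w ⟨hw, hwK⟩
    obtain ⟨z, hz, rfl⟩ := hbij.surjOn hw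
    simp only [Function.comp_apply, hinv z hz, Pi.zero_apply]
    exact image_eq_zero_of_notMem_tsupport fun hzf => hwK ⟨z, hzf, rfl⟩
  have hsupp : tsupport (Ω'.indicator (f ∘ ψ)) ⊆ φ '' tsupport f :=
    tsupport_indicator_subset_of_eqOn_zero hK.isClosed h0
  refine ⟨Ω'.indicator (f ∘ ψ), ?_, hK.of_isClosed_subset (isClosed_tsupport _) hsupp,
    hsupp.trans hKΩ', fun _ hw => indicator_of_mem hw _⟩
  exact (hf.comp_contDiffOn hψ).contDiff_indicator hΩ' hK.isClosed hKΩ' h0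

section ChangeOfVariables

variable {ι : Type*} [Fintype ι] [DecidableEq ι] {Ω Ω' : Set (EuclideanSpace ℝ ι)}
  {φ : EuclideanSpace ℝ ι → EuclideanSpace ℝ ι} {J : EuclideanSpace ℝ ι → Matrix ι ι ℝ}

theorem Matrix.det_toEuclideanCLM_s7 {𝕜 : Type*} [RCLike 𝕜] (A : Matrix ι ι 𝕜) :
    (toEuclideanCLM (𝕜 := 𝕜) A).det = A.det := by
  rw [ContinuousLinearMap.det, coe_toEuclideanCLM_eq_toEuclideanLin,
    toEuclideanLin_eq_toLin_orthonormal, LinearMap.det_toLin]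

theorem integrableOn_iff_integrableOn_of_det_mul_comp_eq (hΩ : MeasurableSet Ω)
    (hbij : BijOn φ Ω Ω') (hJ : ∀ z ∈ Ω, HasFDerivWithinAt φ (toEuclideanCLM (𝕜 := ℝ) (J z)) Ω z)
    (hpos : ∀ z ∈ Ω, 0 < (J z).det) {F G : EuclideanSpace ℝ ι → ℝ}
    (hFG : ∀ z ∈ Ω, (J z).det * F (φ z) = G z) :
    IntegrableOn F Ω' ↔ IntegrableOn G Ω := by
  rw [← hbij.image_eq, integrableOn_image_iff_integrableOn_abs_det_fderiv_smul volume hΩ hJ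
    hbij.injOn]
  refine integrableOn_congr_fun (fun z hz => ?_) hΩ
  rw [det_toEuclideanCLM_s7, abs_of_pos (hpos z hz), smul_eq_mul, hFG z hz]

theorem setIntegral_eq_setIntegral_of_det_mul_comp_eq (hΩ : MeasurableSet Ω)
    (hbij : BijOn φ Ω Ω') (hJ : ∀ z ∈ Ω, HasFDerivWithinAt φ (toEuclideanCLM (𝕜 := ℝ) (J z)) Ω z)
    (hpos : ∀ z ∈ Ω, 0 < (J z).det) {F G : EuclideanSpace ℝ ι → ℝ}
    (hFG : ∀ z ∈ Ω, (J z).det * F (φ z) = G z) :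
    ∫ w in Ω', F w = ∫ z in Ω, G z := by
  rw [← hbij.image_eq, integral_image_eq_integral_abs_det_fderiv_smul volume hΩ hJ hbij.injOn]
  refine setIntegral_congr_fun hΩ fun z hz => ?_
  rw [det_toEuclideanCLM_s7, abs_of_pos (hpos z hz), smul_eq_mul, hFG z hz]

end ChangeOfVariables

theorem gradient_comp_eq_adjoint {E F : Type*} [NormedAddCommGroup E] [InnerProductSpace ℝ E]
    [CompleteSpace E] [NormedAddCommGroup F] [InnerProductSpace ℝ F] [CompleteSpace F]
    {f : E → ℝ} {ψ : F → E} {B : F →L[ℝ] E} {w : F} (hf : DifferentiableAt ℝ f (ψ w))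
    (hψ : HasFDerivAt ψ B w) :
    gradient (f ∘ ψ) w = B.adjoint (gradient f (ψ w)) := by
  refine ext_inner_right ℝ fun v => ?_
  rw [inner_gradient_left, (hf.hasFDerivAt.comp w hψ).fderiv, ContinuousLinearMap.comp_apply,
    ← inner_gradient_left, ContinuousLinearMap.adjoint_inner_left]

theorem HasFDerivAt.comp_eq_id_of_eventually_leftInverse {𝕜 E F : Type*}
    [NontriviallyNormedField 𝕜] [NormedAddCommGroup E] [NormedSpace 𝕜 E]
    [NormedAddCommGroup F] [NormedSpace 𝕜 F] {φ : E → F} {ψ : F → E} {L : E →L[𝕜] F}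
    {B : F →L[𝕜] E} {z : E} (hφ : HasFDerivAt φ L z) (hψ : HasFDerivAt ψ B (φ z))
    (hinv : ∀ᶠ x in 𝓝 z, ψ (φ x) = x) : B.comp L = .id 𝕜 E :=
  (hψ.comp z hφ).unique ((hasFDerivAt_id z).congr_of_eventuallyEq hinv)

section Matrix

variable {ι : Type*} [Fintype ι] [DecidableEq ι]

theorem Matrix.adjoint_toEuclideanCLM (N : Matrix ι ι ℝ) :
    (toEuclideanCLM (𝕜 := ℝ) N).adjoint = toEuclideanCLM (𝕜 := ℝ) Nᵀ := by
  rw [← ContinuousLinearMap.star_eq_adjoint, ← map_star]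
  rfl

theorem Matrix.eq_toEuclideanCLM_inv_of_comp_eq_id {J : Matrix ι ι ℝ}
    {B : EuclideanSpace ℝ ι →L[ℝ] EuclideanSpace ℝ ι}
    (h : B.comp (toEuclideanCLM (𝕜 := ℝ) J) = .id ℝ _) : B = toEuclideanCLM (𝕜 := ℝ) J⁻¹ := by
  have hN : (toEuclideanCLM (𝕜 := ℝ) (n := ι)).symm B * J = 1 := by
    simpa [map_mul] using congrArg (toEuclideanCLM (𝕜 := ℝ) (n := ι)).symm
      (show B * toEuclideanCLM (𝕜 := ℝ) J = 1 from h)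
  rw [inv_eq_left_inv hN, StarAlgEquiv.apply_symm_apply]

theorem Matrix.inner_toEuclideanCLM_self_of_mul_mul_transpose_eq {J A : Matrix ι ι ℝ} {c : ℝ}
    (hJ : IsUnit J.det) (hA : J * A * Jᵀ = c • 1) (u : EuclideanSpace ℝ ι) :
    ⟪toEuclideanCLM (𝕜 := ℝ) A u, u⟫ = c * ‖toEuclideanCLM (𝕜 := ℝ) J⁻¹ᵀ u‖ ^ 2 := by
  have hleft : J⁻¹ * J = 1 := nonsing_inv_mul J hJ
  have hright : Jᵀ * J⁻¹ᵀ = 1 := by rw [← transpose_mul, hleft, transpose_one]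
  have hA' : A = c • (J⁻¹ * J⁻¹ᵀ) := by
    calc A = (J⁻¹ * J) * A * (Jᵀ * J⁻¹ᵀ) := by rw [hleft, hright, Matrix.one_mul, Matrix.mul_one]
      _ = J⁻¹ * (J * A * Jᵀ) * J⁻¹ᵀ := by simp only [Matrix.mul_assoc]
      _ = c • (J⁻¹ * J⁻¹ᵀ) := by rw [hA, Matrix.mul_smul, Matrix.mul_one, Matrix.smul_mul]
  rw [hA', map_smul, map_mul, _root_.smul_apply, mul_apply_eq_comp, real_inner_smul_left,
    ← transpose_transpose J⁻¹, ← adjoint_toEuclideanCLM, ContinuousLinearMap.adjoint_inner_left,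
    transpose_transpose, real_inner_self_eq_norm_sq]

theorem gradient_comp_eq_toEuclideanCLM_inv_transpose
    {φ ψ : EuclideanSpace ℝ ι → EuclideanSpace ℝ ι} {J : Matrix ι ι ℝ}
    {f : EuclideanSpace ℝ ι → ℝ} {z : EuclideanSpace ℝ ι}
    (hφ : HasFDerivAt φ (toEuclideanCLM (𝕜 := ℝ) J) z) (hψ : DifferentiableAt ℝ ψ (φ z))
    (hinv : ∀ᶠ x in 𝓝 z, ψ (φ x) = x) (hf : DifferentiableAt ℝ f z) :
    gradient (f ∘ ψ) (φ z) = toEuclideanCLM (𝕜 := ℝ) J⁻¹ᵀ (gradient f z) := by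
  have hψz : ψ (φ z) = z := hinv.self_of_nhds
  rw [gradient_comp_eq_adjoint (by rwa [hψz]) hψ.hasFDerivAt,
    eq_toEuclideanCLM_inv_of_comp_eq_id
      (hφ.comp_eq_id_of_eventually_leftInverse hψ.hasFDerivAt hinv),
    adjoint_toEuclideanCLM, hψz]

end Matrix

theorem setIntegral_le_mul_setIntegral_of_inv_le {X : Type*} [MeasurableSpace X]
    {μ : Measure X} {s : Set X} {u w : X → ℝ} {M : ℝ} (hs : MeasurableSet s) (hM : 0 < M)
    (hu : ∀ x ∈ s, 0 ≤ u x) (hw : ∀ x ∈ s, 1 / M ≤ w x)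
    (hwu : IntegrableOn (fun x => w x * u x) s μ) :
    ∫ x in s, u x ∂μ ≤ M * ∫ x in s, w x * u x ∂μ := by
  rw [← integral_const_mul]
  refine integral_mono_of_nonneg (ae_restrict_of_forall_mem hs hu) (hwu.const_mul M)
    (ae_restrict_of_forall_mem hs fun x hx => ?_)
  calc u x = M * (1 / M) * u x := by field_simp
    _ ≤ M * w x * u x := by gcongr; exacts [hu x hx, hw x hx]
    _ = M * (w x * u x) := mul_assoc _ _ _

theorem stmt7_general (Ω Ω' : Set (EuclideanSpace ℝ (Fin 2))) (hΩ : IsOpen Ω) (hΩ' : IsOpen Ω')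
    (φ ψ : EuclideanSpace ℝ (Fin 2) → EuclideanSpace ℝ (Fin 2))
    (hbij : Set.BijOn φ Ω Ω') (hinv : ∀ z ∈ Ω, ψ (φ z) = z)
    (hψ : ContDiffOn ℝ 1 ψ Ω')
    (J : EuclideanSpace ℝ (Fin 2) → Matrix (Fin 2) (Fin 2) ℝ)
    (hJ : ∀ z ∈ Ω, HasFDerivAt φ (Matrix.toEuclideanCLM (𝕜 := ℝ) (J z)) z)
    (hpos : ∀ z ∈ Ω, 0 < (J z).det)
    (A : EuclideanSpace ℝ (Fin 2) → Matrix (Fin 2) (Fin 2) ℝ)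
    (hagree : ∀ z ∈ Ω, J z * A z * (J z)ᵀ = (J z).det • (1 : Matrix (Fin 2) (Fin 2) ℝ))
    (M : ℝ) (hM : 0 < M) (hMdet : ∀ z ∈ Ω, 1 / M ≤ (J z).det)
    (lam : ℝ)
    (hP : ∀ g : EuclideanSpace ℝ (Fin 2) → ℝ,
      ContDiff ℝ 1 g → HasCompactSupport g → tsupport g ⊆ Ω' →
      ∫ w in Ω', |g w| ^ 2 ≤ (1 / lam) * ∫ w in Ω', ‖gradient g w‖ ^ 2)
    (f : EuclideanSpace ℝ (Fin 2) → ℝ)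
    (hf : ContDiff ℝ 1 f) (hfc : HasCompactSupport f) (hfs : tsupport f ⊆ Ω) :
    ∫ z in Ω, |f z| ^ 2 ≤
      (M / lam) * ∫ z in Ω, (inner ℝ (Matrix.toEuclideanCLM (𝕜 := ℝ) (A z) (gradient f z))
        (gradient f z) : ℝ) := by
  have hΩm : MeasurableSet Ω := hΩ.measurableSet
  have hJΩ : ∀ z ∈ Ω, HasFDerivWithinAt φ (toEuclideanCLM (𝕜 := ℝ) (J z)) Ω z :=
    fun z hz => (hJ z hz).hasFDerivWithinAt
  obtain ⟨g, hgC1, hgc, hgs, hgψ⟩ := exists_contDiff_hasCompactSupport_eqOn_comp hΩ' hbij hinv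
    (fun z hz => (hJ z hz).continuousAt.continuousWithinAt) hψ hf hfc hfs
  have hgφ : ∀ z ∈ Ω, g =ᶠ[𝓝 (φ z)] f ∘ ψ := fun z hz =>
    eventually_of_mem (hΩ'.mem_nhds (hbij.mapsTo hz)) hgψ
  have hgf : ∀ z ∈ Ω, g (φ z) = f z := fun z hz => by
    rw [(hgφ z hz).self_of_nhds, Function.comp_apply, hinv z hz]
  have henergy : ∀ z ∈ Ω, (J z).det * ‖gradient g (φ z)‖ ^ 2 =
      ⟪toEuclideanCLM (𝕜 := ℝ) (A z) (gradient f z), gradient f z⟫ := fun z hz => by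
    rw [(hgφ z hz).gradient_eq, gradient_comp_eq_toEuclideanCLM_inv_transpose (hJ z hz)
      ((hψ.differentiableOn one_ne_zero).differentiableAt (hΩ'.mem_nhds (hbij.mapsTo hz)))
      (eventually_of_mem (hΩ.mem_nhds hz) hinv) (hf.differentiable one_ne_zero z),
      inner_toEuclideanCLM_self_of_mul_mul_transpose_eq (hpos z hz).ne'.isUnit (hagree z hz)]
  have hint : IntegrableOn (fun z => (J z).det * |f z| ^ 2) Ω :=
    (integrableOn_iff_integrableOn_of_det_mul_comp_eq hΩm hbij hJΩ hpos
      fun z hz => by rw [hgf z hz]).1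
    ((by fun_prop : Continuous fun w => |g w| ^ 2).integrable_of_hasCompactSupport
      (hgc.comp_left (g := fun x : ℝ => |x| ^ 2) (by simp))).integrableOn
  have hmass : ∫ w in Ω', |g w| ^ 2 = ∫ z in Ω, (J z).det * |f z| ^ 2 :=
    setIntegral_eq_setIntegral_of_det_mul_comp_eq hΩm hbij hJΩ hpos fun z hz => by rw [hgf z hz]
  calc ∫ z in Ω, |f z| ^ 2 ≤ M * ∫ z in Ω, (J z).det * |f z| ^ 2 :=
        setIntegral_le_mul_setIntegral_of_inv_le hΩm hM (fun _ _ => by positivity) hMdet hint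
    _ = M * ∫ w in Ω', |g w| ^ 2 := by rw [hmass]
    _ ≤ M * ((1 / lam) * ∫ w in Ω', ‖gradient g w‖ ^ 2) := by
        gcongr
        exact hP g hgC1 hgc hgs
    _ = M / lam * ∫ z in Ω, ⟪toEuclideanCLM (𝕜 := ℝ) (A z) (gradient f z), gradient f z⟫ := by
        rw [setIntegral_eq_setIntegral_of_det_mul_comp_eq hΩm hbij hJΩ hpos henergy]
        ring

/-- the eigenvalue estimate `λ₁(A,Ω) ≥ λ₁(Ω̃)/‖J_{φ⁻¹}‖_{L^∞(Ω̃)}` expressed via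
Poincaré inequalities: if `det Dφ ≥ 1/M` on `Ω` and the Poincaré inequality with constant
`1/λ` holds on `Ω̃`, then `∫_Ω |f|² ≤ (M/λ)∫_Ω ⟨A∇f,∇f⟩` for test functions on `Ω`. -/
theorem stmt7 (Ω Ω' : Set (EuclideanSpace ℝ (Fin 2))) (hΩ : IsOpen Ω) (hΩ' : IsOpen Ω')
    (φ ψ : EuclideanSpace ℝ (Fin 2) → EuclideanSpace ℝ (Fin 2))
    (hbij : Set.BijOn φ Ω Ω') (hinv : ∀ z ∈ Ω, ψ (φ z) = z)
    (hφ : ContDiffOn ℝ 1 φ Ω) (hψ : ContDiffOn ℝ 1 ψ Ω')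
    (J : EuclideanSpace ℝ (Fin 2) → Matrix (Fin 2) (Fin 2) ℝ)
    (hJ : ∀ z ∈ Ω, HasFDerivAt φ (Matrix.toEuclideanCLM (𝕜 := ℝ) (J z)) z)
    (hpos : ∀ z ∈ Ω, 0 < (J z).det)
    (A : EuclideanSpace ℝ (Fin 2) → Matrix (Fin 2) (Fin 2) ℝ)
    (hsym : ∀ z ∈ Ω, (A z).IsSymm)
    (hagree : ∀ z ∈ Ω, J z * A z * (J z)ᵀ = (J z).det • (1 : Matrix (Fin 2) (Fin 2) ℝ))
    (M : ℝ) (hM : 0 < M) (hMdet : ∀ z ∈ Ω, 1 / M ≤ (J z).det)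
    (lam : ℝ) (hlam : 0 < lam)
    (hP : ∀ g : EuclideanSpace ℝ (Fin 2) → ℝ,
      ContDiff ℝ 1 g → HasCompactSupport g → tsupport g ⊆ Ω' →
      ∫ w in Ω', |g w| ^ 2 ≤ (1 / lam) * ∫ w in Ω', ‖gradient g w‖ ^ 2)
    (f : EuclideanSpace ℝ (Fin 2) → ℝ)
    (hf : ContDiff ℝ 1 f) (hfc : HasCompactSupport f) (hfs : tsupport f ⊆ Ω) :
    ∫ z in Ω, |f z| ^ 2 ≤
      (M / lam) * ∫ z in Ω, (inner ℝ (Matrix.toEuclideanCLM (𝕜 := ℝ) (A z) (gradient f z))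
        (gradient f z) : ℝ) :=
  stmt7_general Ω Ω' hΩ hΩ' φ ψ hbij hinv hψ J hJ hpos A hagree M hM hMdet lam hP f hf hfc hfs
end

section
/- Let Ω = { z ∈ ℂ : z ≠ 0 and |z| < (cos(arg z / 2))⁴ }, where arg denotes the principal argument in (−π, π], and let D = { w ∈ ℂ : |w| < 1 and w ≠ −1 }. Then the map F(z) = 2·|z|^{1/4}·exp(i·arg z / 2) − 1 is a bijection from Ω onto D. -/
/-!
Write `F z = 2 q(z) - 1` with `q(z) = |z|^{1/4} e^{i arg z / 2}`. In polar coordinates `q` is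
`(r, θ) ↦ (r^{1/4}, θ/2)`, a bijection of `ℂ` onto the sector `-π/2 < θ ≤ π/2` that carries
the region `r < cos⁴(θ/2)` onto the region `r < cos θ`, which is the polar form of the disc `|u - 1/2| < 1/2`. The affine map `u ↦ 2u - 1` takes that disc onto the
unit disc, and `-1 = F 0` is excluded because `0` lies on the boundary circle.
-/

noncomputable section

open Complex Set Metric
open scoped Real

lemma arg_ofReal_mul_exp_mul_I {r θ : ℝ} (hr : 0 < r) (hθ : θ ∈ Ioc (-π) π) :
    arg (r * exp (θ * I)) = θ := by
  rw [arg_real_mul _ hr, arg_exp_mul_I, toIocMod_eq_self]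
  simpa [two_mul, ← sub_eq_add_neg] using hθ

lemma mem_ball_half_half_iff (u : ℂ) :
    u ∈ ball (1 / 2 : ℂ) (1 / 2) ↔ u ≠ 0 ∧ ‖u‖ < Real.cos (arg u) := by
  have hball : u ∈ ball (1 / 2 : ℂ) (1 / 2) ↔ ‖u‖ ^ 2 < ‖u‖ * Real.cos (arg u) := by
    rw [mem_ball, dist_eq_norm, norm_mul_cos_arg, ← sq_lt_sq₀ (norm_nonneg _) (by norm_num),
      ← normSq_eq_norm_sq, ← normSq_eq_norm_sq, normSq_apply, normSq_apply]
    simp only [sub_re, sub_im, div_ofNat_re, div_ofNat_im, one_re, one_im]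
    constructor <;> intro h <;> nlinarith
  rw [hball, ← norm_pos_iff, sq]
  constructor
  · intro h
    have hu : 0 < ‖u‖ := (norm_nonneg u).lt_of_ne fun h0 => by simp [← h0] at h
    exact ⟨hu, lt_of_mul_lt_mul_left h hu.le⟩
  · rintro ⟨hu, h⟩
    exact mul_lt_mul_of_pos_left h hu

def quarterRootHalfArg (z : ℂ) : ℂ :=
  ((‖z‖ ^ ((1 : ℝ) / 4) : ℝ) : ℂ) * exp (I * ((arg z / 2 : ℝ) : ℂ))

lemma norm_quarterRootHalfArg (z : ℂ) :
    ‖quarterRootHalfArg z‖ = ‖z‖ ^ ((1 : ℝ) / 4) := by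
  rw [quarterRootHalfArg, norm_mul, mul_comm I, norm_exp_ofReal_mul_I, mul_one,
    Complex.norm_of_nonneg (by positivity)]

lemma norm_quarterRootHalfArg_pow_four (z : ℂ) : ‖quarterRootHalfArg z‖ ^ 4 = ‖z‖ := by
  rw [norm_quarterRootHalfArg, one_div]
  exact Real.rpow_inv_natCast_pow (norm_nonneg z) (by norm_num)

lemma arg_div_two_mem_Ioc (z : ℂ) : arg z / 2 ∈ Ioc (-(π / 2)) (π / 2) :=
  ⟨by linarith [neg_pi_lt_arg z], by linarith [arg_le_pi z]⟩

lemma arg_quarterRootHalfArg (z : ℂ) : arg (quarterRootHalfArg z) = arg z / 2 := by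
  rcases eq_or_ne z 0 with rfl | hz
  · simp [quarterRootHalfArg]
  obtain ⟨hlo, hhi⟩ := arg_div_two_mem_Ioc z
  rw [quarterRootHalfArg, mul_comm I]
  exact arg_ofReal_mul_exp_mul_I (by positivity) ⟨by linarith [Real.pi_pos], by linarith⟩

lemma quarterRootHalfArg_injective : Function.Injective quarterRootHalfArg := by
  intro z w h
  apply ext_norm_arg
  · rw [← norm_quarterRootHalfArg_pow_four z, ← norm_quarterRootHalfArg_pow_four w, h]
  · have := congrArg arg h
    rw [arg_quarterRootHalfArg, arg_quarterRootHalfArg] at this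
    linarith

lemma exists_quarterRootHalfArg_eq {u : ℂ} (hu : arg u ∈ Ioc (-(π / 2)) (π / 2)) :
    ∃ z, quarterRootHalfArg z = u := by
  rcases eq_or_ne u 0 with rfl | hu0
  · exact ⟨0, by simp [quarterRootHalfArg]⟩
  have hpos : 0 < ‖u‖ ^ 4 := by positivity
  set z : ℂ := ((‖u‖ ^ 4 : ℝ) : ℂ) * exp ((2 * arg u : ℝ) * I) with hz
  have hnorm : ‖z‖ = ‖u‖ ^ 4 := by
    rw [hz, norm_mul, norm_exp_ofReal_mul_I, mul_one, Complex.norm_of_nonneg hpos.le]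
  have harg : arg z = 2 * arg u :=
    arg_ofReal_mul_exp_mul_I hpos ⟨by linarith [hu.1], by linarith [hu.2]⟩
  refine ⟨z, ext_norm_arg ?_ ?_⟩
  · rw [norm_quarterRootHalfArg, hnorm, one_div]
    exact Real.pow_rpow_inv_natCast (norm_nonneg u) (by norm_num)
  · rw [arg_quarterRootHalfArg, harg]
    ring

lemma quarterRootHalfArg_mem_ball_iff (z : ℂ) :
    quarterRootHalfArg z ∈ ball (1 / 2 : ℂ) (1 / 2) ↔
      z ≠ 0 ∧ ‖z‖ < Real.cos (arg z / 2) ^ 4 := by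
  have hcos : 0 ≤ Real.cos (arg z / 2) := by
    obtain ⟨hlo, hhi⟩ := arg_div_two_mem_Ioc z
    exact Real.cos_nonneg_of_mem_Icc ⟨hlo.le, hhi⟩
  have hzero : quarterRootHalfArg z ≠ 0 ↔ z ≠ 0 := by
    rw [← norm_ne_zero_iff, norm_quarterRootHalfArg, ne_eq,
      Real.rpow_eq_zero (norm_nonneg z) (by norm_num), norm_eq_zero]
  rw [mem_ball_half_half_iff, arg_quarterRootHalfArg, hzero,
    ← norm_quarterRootHalfArg_pow_four z, pow_lt_pow_iff_left₀ (norm_nonneg _) hcos (by norm_num)]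

lemma bijOn_quarterRootHalfArg :
    BijOn quarterRootHalfArg {z | z ≠ 0 ∧ ‖z‖ < Real.cos (arg z / 2) ^ 4}
      (ball (1 / 2 : ℂ) (1 / 2)) := by
  refine ⟨fun z hz => (quarterRootHalfArg_mem_ball_iff z).2 hz,
    quarterRootHalfArg_injective.injOn, fun u hu => ?_⟩
  obtain ⟨hu0, hlt⟩ := (mem_ball_half_half_iff u).1 hu
  have hre : 0 < u.re := by
    rw [← norm_mul_cos_arg]
    exact mul_pos (norm_pos_iff.2 hu0) ((norm_nonneg u).trans_lt hlt)
  have harg : |arg u| < π / 2 := abs_arg_lt_pi_div_two_iff.2 (Or.inl hre)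
  obtain ⟨z, rfl⟩ := exists_quarterRootHalfArg_eq ⟨(abs_lt.1 harg).1, (abs_lt.1 harg).2.le⟩
  exact ⟨z, (quarterRootHalfArg_mem_ball_iff z).1 hu, rfl⟩

lemma bijOn_two_mul_sub_one :
    BijOn (fun u : ℂ => 2 * u - 1) (ball (1 / 2) (1 / 2)) {w | ‖w‖ < 1 ∧ w ≠ -1} := by
  have hnorm : ∀ u : ℂ, ‖2 * u - 1‖ = 2 * dist u (1 / 2) := fun u => by
    rw [dist_eq_norm, ← RCLike.norm_ofNat (K := ℂ) 2, ← norm_mul]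
    ring_nf
  refine ⟨fun u hu => ⟨?_, ?_⟩, fun u _ v _ h => ?_, fun w hw => ⟨(w + 1) / 2, ?_, ?_⟩⟩
  · rw [hnorm]
    linarith [mem_ball.1 hu]
  · intro h
    have hu0 : u = 0 := by linear_combination h / 2
    simp [hu0] at hu
  · simpa using h
  · rw [mem_ball, dist_eq_norm, show (w + 1) / 2 - 1 / 2 = w / 2 by ring, norm_div]
    simp only [RCLike.norm_ofNat]
    linarith [hw.1]
  · ring

/-- the map `F(z) = 2·|z|^{1/4}·exp(i·arg z/2) − 1` is a bijection from the
interior (minus the origin) of the domain bounded by `ρ = cos⁴(θ/2)` onto the unit disc with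
the point `−1` removed. -/
theorem stmt14 :
    let F : ℂ → ℂ := fun z =>
      2 * ((‖z‖ ^ ((1 : ℝ) / 4) : ℝ) : ℂ) *
        Complex.exp (Complex.I * ((Complex.arg z / 2 : ℝ) : ℂ)) - 1
    let Ω : Set ℂ := {z | z ≠ 0 ∧ ‖z‖ < Real.cos (Complex.arg z / 2) ^ 4}
    let D : Set ℂ := {w | ‖w‖ < 1 ∧ w ≠ -1}
    Set.BijOn F Ω D ∧ F '' Ω = D := by
  intro F Ω D
  have hF : F = (fun u : ℂ => 2 * u - 1) ∘ quarterRootHalfArg := by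
    funext z
    simp only [F, Function.comp_apply, quarterRootHalfArg, mul_assoc]
  have hbij : BijOn F Ω D := hF ▸ bijOn_two_mul_sub_one.comp bijOn_quarterRootHalfArg
  exact ⟨hbij, hbij.image_eq⟩
end
end

section
/- Let z ∈ ℂ be neither zero nor a negative real number (i.e. z ∉ (−∞, 0]). Then the map φ(w) = 2·w^{3/8}·(w̄)^{−1/8} − 1, defined using the principal branch of the complex power, is real-differentiable at z, its Jacobian determinant at z equals 1/(2·|z|^{3/2}), and its Beltrami coefficient at z equals μ(z) = −(1/3)·z/z̄; in particular |μ(z)| = 1/3. -/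
/-!
On the slit plane, `F(w) = c·w^α·w̄^β` has real derivative `(αF/z)·dw + (βF/z̄)·dw̄`, so
`F_z = αF/z`, `F_z̄ = βF/z̄`, the Beltrami coefficient is `(β/α)·z/z̄` and the Jacobian is
`(|α|² − |β|²)·|F|²/|z|²`. For `φ = F − 1` with `c = 2`, `α = 3/8`, `β = −1/8` we have
`|F| = 2|z|^{1/4}`, which gives `μ = −z/(3z̄)` and `J = 1/(2|z|^{3/2})`.
-/

open ComplexConjugate

namespace Complex

variable (a b : ℂ)

theorem det_smul_one_add_smul_conjCLE :
    LinearMap.det (((a • (1 : ℂ →L[ℝ] ℂ) + b • (conjCLE : ℂ →L[ℝ] ℂ)) : ℂ →L[ℝ] ℂ) :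
      ℂ →ₗ[ℝ] ℂ) = ‖a‖ ^ 2 - ‖b‖ ^ 2 := by
  rw [← LinearMap.det_toMatrix basisOneI, Matrix.det_fin_two]
  simp [LinearMap.toMatrix_apply, Complex.sq_norm, normSq_apply]
  ring

theorem smul_one_add_smul_conjCLE_apply (v : ℂ) :
    (a • (1 : ℂ →L[ℝ] ℂ) + b • (conjCLE : ℂ →L[ℝ] ℂ)) v = a * v + b * conj v := rfl

theorem smul_one_add_smul_conjCLE_wirtinger_z :
    let L : ℂ →L[ℝ] ℂ := a • 1 + b • conjCLE
    (L 1 - I * L I) / 2 = a := by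
  simp only [smul_one_add_smul_conjCLE_apply, map_one, conj_I]
  linear_combination (b - a) / 2 * I_mul_I

theorem smul_one_add_smul_conjCLE_wirtinger_zbar :
    let L : ℂ →L[ℝ] ℂ := a • 1 + b • conjCLE
    (L 1 + I * L I) / 2 = b := by
  simp only [smul_one_add_smul_conjCLE_apply, map_one, conj_I]
  linear_combination (a - b) / 2 * I_mul_I

theorem hasFDerivAt_const_mul_cpow_mul_conj_cpow (c α β : ℂ) {z : ℂ} (hz : z ∈ slitPlane) :
    let F : ℂ → ℂ := fun w => c * w ^ α * conj w ^ β
    HasFDerivAt F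
      ((α * F z / z) • (1 : ℂ →L[ℝ] ℂ) + (β * F z / conj z) • (conjCLE : ℂ →L[ℝ] ℂ)) z := by
  intro F
  have hz0 : z ≠ 0 := slitPlane_ne_zero hz
  have hzc : conj z ∈ slitPlane := by
    rw [mem_slitPlane_iff] at hz ⊢
    simpa using hz
  have hpow : HasFDerivAt (fun w : ℂ => w ^ α) ((α * z ^ (α - 1)) • (1 : ℂ →L[ℝ] ℂ)) z := by
    refine ((hasStrictDerivAt_cpow_const hz).hasDerivAt.hasFDerivAt.restrictScalars ℝ)
      |>.congr_fderiv ?_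
    ext v; simp [mul_comm]
  have hconjpow : HasFDerivAt (fun w : ℂ => conj w ^ β)
      ((β * conj z ^ (β - 1)) • (conjCLE : ℂ →L[ℝ] ℂ)) z := by
    refine (((hasStrictDerivAt_cpow_const hzc).hasDerivAt.hasFDerivAt.restrictScalars ℝ).comp z
      conjCLE.toContinuousLinearMap.hasFDerivAt).congr_fderiv ?_
    ext v; simp [mul_comm]
  have hzc0 : conj z ≠ 0 := (map_ne_zero _).2 hz0
  refine ((hpow.const_mul c).mul hconjpow).congr_fderiv ?_
  rw [cpow_sub _ _ hz0, cpow_sub _ _ hzc0, cpow_one, cpow_one]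
  module

theorem norm_const_mul_cpow_mul_conj_cpow (c : ℂ) (α β : ℝ) {z : ℂ} (hz : z ≠ 0) :
    ‖c * z ^ (α : ℂ) * conj z ^ (β : ℂ)‖ = ‖c‖ * ‖z‖ ^ (α + β) := by
  rw [norm_mul, norm_mul, norm_cpow_real, norm_cpow_real, norm_conj, mul_assoc,
    Real.rpow_add (norm_pos_iff.2 hz)]

end Complex

open Complex

/-- the map `φ(w) = 2·w^{3/8}·(w̄)^{−1/8} − 1` (principal branch) is
real-differentiable at every `z` off the closed negative real axis, with Jacobian determinant
`1/(2|z|^{3/2})` and Beltrami coefficient `μ(z) = −(1/3)·z/z̄`, whence `|μ(z)| = 1/3`. -/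
theorem stmt15 (z : ℂ) (hz : ¬(z.im = 0 ∧ z.re ≤ 0)) :
    let φ : ℂ → ℂ := fun w =>
      2 * w ^ ((3 : ℂ) / 8) * (starRingEnd ℂ w) ^ ((-1 : ℂ) / 8) - 1
    DifferentiableAt ℝ φ z ∧
    LinearMap.det ((fderiv ℝ φ z : ℂ →L[ℝ] ℂ) : ℂ →ₗ[ℝ] ℂ) =
      1 / (2 * ‖z‖ ^ ((3 : ℝ) / 2)) ∧
    ((fderiv ℝ φ z 1 + Complex.I * fderiv ℝ φ z Complex.I) / 2) /
        ((fderiv ℝ φ z 1 - Complex.I * fderiv ℝ φ z Complex.I) / 2) =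
      -(1 / 3) * (z / starRingEnd ℂ z) ∧
    ‖(-(1 / 3 : ℂ) * (z / starRingEnd ℂ z))‖ = 1 / 3 := by
  intro φ
  have hzs : z ∈ slitPlane := mem_slitPlane_iff.2 (by contrapose! hz; exact ⟨hz.2, hz.1⟩)
  have hz0 : z ≠ 0 := slitPlane_ne_zero hzs
  set F := 2 * z ^ ((3 : ℂ) / 8) * conj z ^ ((-1 : ℂ) / 8)
  have hφ : HasFDerivAt φ ((3 / 8 * F / z) • (1 : ℂ →L[ℝ] ℂ) +
      (-1 / 8 * F / conj z) • (conjCLE : ℂ →L[ℝ] ℂ)) z :=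
    (hasFDerivAt_const_mul_cpow_mul_conj_cpow 2 _ _ hzs).sub_const 1
  have hF : ‖F‖ = 2 * ‖z‖ ^ (1 / 4 : ℝ) := by
    have := norm_const_mul_cpow_mul_conj_cpow 2 (3 / 8) (-1 / 8) hz0
    push_cast at this
    rw [this]; norm_num
  have hF0 : F ≠ 0 := by
    rw [← norm_ne_zero_iff, hF]; positivity
  have hr : 0 < ‖z‖ := norm_pos_iff.2 hz0
  refine ⟨hφ.differentiableAt, ?_, ?_, ?_⟩
  · have hsplit : ‖z‖ ^ 2 = (‖z‖ ^ (1 / 4 : ℝ)) ^ 2 * ‖z‖ ^ (3 / 2 : ℝ) := by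
      rw [← Real.rpow_natCast (‖z‖ ^ _) 2, ← Real.rpow_mul hr.le, ← Real.rpow_add hr]; norm_num
    rw [hφ.fderiv, det_smul_one_add_smul_conjCLE]
    simp only [norm_div, norm_mul, hF, norm_conj]
    field_simp
    rw [hsplit]
    norm_num
    ring
  · rw [hφ.fderiv, smul_one_add_smul_conjCLE_wirtinger_z, smul_one_add_smul_conjCLE_wirtinger_zbar]
    field_simp
  · rw [norm_mul, norm_div, norm_conj, div_self hr.ne', norm_neg]
    norm_num
end

section
/- Let a, b : ℝ → ℝ be continuously differentiable on (0,1) and let α₁, α₂, β₁, β₂ be constants with α₁ ≤ a'(x) ≤ α₂ for all x ∈ (0,1), β₁ ≤ b'(y) ≤ β₂ for all y ∈ (0,1), α₁ > β₂ and β₁ > 0. Define φ(x+iy) = a(x) + i·b(y) on Ω = (0,1) × (0,1). Then for every z = x+iy ∈ Ω: (1) the Jacobian determinant of φ at z equals a'(x)·b'(y) and satisfies α₁β₁ ≤ a'(x)b'(y) ≤ α₂β₂; and (2) the operator norm of the derivative of φ at z satisfies ‖Dφ(z)‖² ≤ (α₂/β₁) · a'(x)·b'(y); in particular φ is a quasiconformal,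 quasi-preserving measure homeomorphism with quasiconformality coefficient at most α₂/β₁. -/
open Complex

/-! The map `x + iy ↦ a(x) + i·b(y)` has the diagonal derivative `diag(a'(x), b'(y))`, whose
determinant is `a'(x)b'(y)` and whose operator norm is at most `max(a'(x), b'(y)) = a'(x)`, because
`b' ≤ β₂ < α₁ ≤ a'`. Then `‖Dφ‖² ≤ a'(x)² ≤ α₂·a'(x) ≤ (α₂/β₁)·a'(x)b'(y)`, since `b'(y)/β₁ ≥ 1`. -/

noncomputable section

def diagReIm (p q : ℝ) : ℂ →L[ℝ] ℂ :=
  reCLM.smulRight (p : ℂ) + imCLM.smulRight (I * q)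

@[simp]
lemma diagReIm_apply (p q : ℝ) (w : ℂ) : diagReIm p q w = ↑(p * w.re) + I * ↑(q * w.im) := by
  simp only [diagReIm, add_apply, ContinuousLinearMap.smulRight_apply,
    reCLM_apply, real_smul, imCLM_apply, ofReal_mul]
  ring

lemma det_diagReIm (p q : ℝ) : LinearMap.det (diagReIm p q : ℂ →ₗ[ℝ] ℂ) = p * q := by
  rw [← LinearMap.det_toMatrix basisOneI, Matrix.det_fin_two]
  simp [LinearMap.toMatrix_apply]

lemma norm_diagReIm_le (p q : ℝ) : ‖diagReIm p q‖ ≤ max |p| |q| := by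
  set M := max |p| |q|
  have hM : 0 ≤ M := le_max_of_le_left (abs_nonneg p)
  have hp : p ^ 2 ≤ M ^ 2 := sq_le_sq.2 (by rw [abs_of_nonneg hM]; exact le_max_left _ _)
  have hq : q ^ 2 ≤ M ^ 2 := sq_le_sq.2 (by rw [abs_of_nonneg hM]; exact le_max_right _ _)
  refine ContinuousLinearMap.opNorm_le_bound _ hM fun w => le_of_sq_le_sq ?_ (by positivity)
  calc ‖diagReIm p q w‖ ^ 2 = p ^ 2 * w.re ^ 2 + q ^ 2 * w.im ^ 2 := by
        rw [Complex.sq_norm, Complex.normSq_apply]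
        simp only [diagReIm_apply, add_re, ofReal_re, mul_re, I_re, zero_mul, ofReal_im,
          mul_zero, I_im, one_mul, sub_self, add_zero, add_im, mul_im, zero_add]
        ring
    _ ≤ M ^ 2 * w.re ^ 2 + M ^ 2 * w.im ^ 2 := by gcongr
    _ = (M * ‖w‖) ^ 2 := by rw [mul_pow, Complex.sq_norm, Complex.normSq_apply]; ring

lemma hasFDerivAt_ofReal_re_add_I_mul_ofReal_im {a b : ℝ → ℝ} {p q : ℝ} {z : ℂ}
    (ha : HasDerivAt a p z.re) (hb : HasDerivAt b q z.im) :
    HasFDerivAt (fun w : ℂ => (a w.re : ℂ) + I * b w.im) (diagReIm p q) z := by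
  have hre := ha.ofReal_comp.hasFDerivAt.comp z reCLM.hasFDerivAt
  have him := (hb.ofReal_comp.const_mul I).hasFDerivAt.comp z imCLM.hasFDerivAt
  refine (hre.add him).congr_fderiv ?_
  ext w
  simp [diagReIm]

end

theorem stmt16_general (a b a' b' : ℝ → ℝ) (α₁ α₂ β₁ β₂ : ℝ)
    (ha : ∀ x ∈ Set.Ioo (0 : ℝ) 1, HasDerivAt a (a' x) x)
    (hb : ∀ y ∈ Set.Ioo (0 : ℝ) 1, HasDerivAt b (b' y) y)
    (hA1 : ∀ x ∈ Set.Ioo (0 : ℝ) 1, α₁ ≤ a' x) (hA2 : ∀ x ∈ Set.Ioo (0 : ℝ) 1, a' x ≤ α₂)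
    (hB1 : ∀ y ∈ Set.Ioo (0 : ℝ) 1, β₁ ≤ b' y) (hB2 : ∀ y ∈ Set.Ioo (0 : ℝ) 1, b' y ≤ β₂)
    (hαβ : β₂ < α₁) (hβ : 0 < β₁)
    (φ : ℂ → ℂ) (hφ : ∀ z : ℂ, φ z = ((a z.re : ℝ) : ℂ) + Complex.I * ((b z.im : ℝ) : ℂ))
    (z : ℂ) (hz : z.re ∈ Set.Ioo (0 : ℝ) 1 ∧ z.im ∈ Set.Ioo (0 : ℝ) 1) :
    DifferentiableAt ℝ φ z ∧
    LinearMap.det ((fderiv ℝ φ z : ℂ →L[ℝ] ℂ) : ℂ →ₗ[ℝ] ℂ) = a' z.re * b' z.im ∧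
    α₁ * β₁ ≤ a' z.re * b' z.im ∧ a' z.re * b' z.im ≤ α₂ * β₂ ∧
    ‖fderiv ℝ φ z‖ ^ 2 ≤ (α₂ / β₁) * (a' z.re * b' z.im) := by
  obtain ⟨hx, hy⟩ := hz
  set A := a' z.re
  set B := b' z.im
  have hder : HasFDerivAt φ (diagReIm A B) z := by
    rw [funext hφ]
    exact hasFDerivAt_ofReal_re_add_I_mul_ofReal_im (ha _ hx) (hb _ hy)
  rw [hder.fderiv]
  have hB : 0 < B := hβ.trans_le (hB1 _ hy)
  have hBA : B ≤ A := (hB2 _ hy).trans (hαβ.le.trans (hA1 _ hx))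
  have hA : 0 ≤ A := hB.le.trans hBA
  have hnorm : ‖diagReIm A B‖ ≤ A := by
    simpa [abs_of_nonneg hA, abs_of_pos hB, hBA] using norm_diagReIm_le A B
  refine ⟨hder.differentiableAt, det_diagReIm A B,
    mul_le_mul (hA1 _ hx) (hB1 _ hy) hβ.le hA, mul_le_mul (hA2 _ hx) (hB2 _ hy) hB.le
    (hA.trans (hA2 _ hx)), ?_⟩
  calc ‖diagReIm A B‖ ^ 2 ≤ A * A := by rw [sq]; exact mul_self_le_mul_self (norm_nonneg _) hnorm
    _ ≤ α₂ * A := mul_le_mul_of_nonneg_right (hA2 _ hx) hA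
    _ ≤ α₂ * A * (B / β₁) :=
        le_mul_of_one_le_right (mul_nonneg (hA.trans (hA2 _ hx)) hA) ((one_le_div hβ).2 (hB1 _ hy))
    _ = α₂ / β₁ * (A * B) := by field_simp

/-- for `φ(x+iy) = a(x) + i·b(y)` on the unit square with
`α₁ ≤ a' ≤ α₂`, `β₁ ≤ b' ≤ β₂`, `α₁ > β₂`, `β₁ > 0`, the Jacobian determinant equals
`a'(x)b'(y) ∈ [α₁β₁, α₂β₂]` and the squared operator norm of the derivative is at most
`(α₂/β₁)·a'(x)b'(y)`; in particular `φ` is quasiconformal with coefficient at most `α₂/β₁`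
and quasi-preserves measure. -/
theorem stmt16 (a b a' b' : ℝ → ℝ) (α₁ α₂ β₁ β₂ : ℝ)
    (ha : ∀ x ∈ Set.Ioo (0 : ℝ) 1, HasDerivAt a (a' x) x)
    (hb : ∀ y ∈ Set.Ioo (0 : ℝ) 1, HasDerivAt b (b' y) y)
    (ha' : ContinuousOn a' (Set.Ioo 0 1)) (hb' : ContinuousOn b' (Set.Ioo 0 1))
    (hA1 : ∀ x ∈ Set.Ioo (0 : ℝ) 1, α₁ ≤ a' x) (hA2 : ∀ x ∈ Set.Ioo (0 : ℝ) 1, a' x ≤ α₂)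
    (hB1 : ∀ y ∈ Set.Ioo (0 : ℝ) 1, β₁ ≤ b' y) (hB2 : ∀ y ∈ Set.Ioo (0 : ℝ) 1, b' y ≤ β₂)
    (hαβ : β₂ < α₁) (hβ : 0 < β₁)
    (φ : ℂ → ℂ) (hφ : ∀ z : ℂ, φ z = ((a z.re : ℝ) : ℂ) + Complex.I * ((b z.im : ℝ) : ℂ))
    (z : ℂ) (hz : z.re ∈ Set.Ioo (0 : ℝ) 1 ∧ z.im ∈ Set.Ioo (0 : ℝ) 1) :
    DifferentiableAt ℝ φ z ∧
    LinearMap.det ((fderiv ℝ φ z : ℂ →L[ℝ] ℂ) : ℂ →ₗ[ℝ] ℂ) = a' z.re * b' z.im ∧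
    α₁ * β₁ ≤ a' z.re * b' z.im ∧ a' z.re * b' z.im ≤ α₂ * β₂ ∧
    ‖fderiv ℝ φ z‖ ^ 2 ≤ (α₂ / β₁) * (a' z.re * b' z.im) :=
  stmt16_general a b a' b' α₁ α₂ β₁ β₂ ha hb hA1 hA2 hB1 hB2 hαβ hβ φ hφ z hz
end

section
/- Let f : ℝ → ℝ be differentiable at y₀ ∈ ℝ, and define φ : ℂ → ℂ by φ(x+iy) = (x + f(y)) + i·y. Then at any point z₀ = x₀ + i·y₀: (1) φ is real-differentiable with Jacobian determinant equal to 1; (2) the Wirtinger derivatives are φ_z = 1 − i·f'(y₀)/2 and φ_z̄ = i·f'(y₀)/2, so the Beltrami coefficient is μ = (−f'(y₀)² + 2i·f'(y₀))/(4 + f'(y₀)²); and (3) the Jacobian matrix D = Dφ(z₀) satisfies D·A·Dᵀ = I with A = [[1 + f'(y₀)², −f'(y₀)], [−f'(y₀), 1]], i.e. the matrix A is agreed with φ at z₀. -/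
open Matrix

noncomputable section

/-- for the shear map `φ(x+iy) = (x + f(y)) + iy` with `f` differentiable at
`y₀` with derivative `d`: `φ` is real-differentiable at `z₀ = x₀ + iy₀` with Jacobian
determinant `1`, Wirtinger derivatives `φ_z = 1 − id/2`, `φ_z̄ = id/2`, Beltrami coefficient
`(−d² + 2id)/(4 + d²)`, and its Jacobian matrix `D` satisfies `D·A·Dᵀ = I` with
`A = [[1 + d², −d], [−d, 1]]`. -/
theorem stmt18 (f : ℝ → ℝ) (y₀ d : ℝ) (hf : HasDerivAt f d y₀) (x₀ : ℝ)
    (φ : ℂ → ℂ)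
    (hφ : ∀ z : ℂ, φ z = ((z.re + f z.im : ℝ) : ℂ) + Complex.I * ((z.im : ℝ) : ℂ)) :
    let z₀ : ℂ := (x₀ : ℂ) + (y₀ : ℂ) * Complex.I
    DifferentiableAt ℝ φ z₀ ∧
    LinearMap.det ((fderiv ℝ φ z₀ : ℂ →L[ℝ] ℂ) : ℂ →ₗ[ℝ] ℂ) = 1 ∧
    (fderiv ℝ φ z₀ 1 - Complex.I * fderiv ℝ φ z₀ Complex.I) / 2 =
      1 - Complex.I * ((d / 2 : ℝ) : ℂ) ∧
    (fderiv ℝ φ z₀ 1 + Complex.I * fderiv ℝ φ z₀ Complex.I) / 2 =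
      Complex.I * ((d / 2 : ℝ) : ℂ) ∧
    ((fderiv ℝ φ z₀ 1 + Complex.I * fderiv ℝ φ z₀ Complex.I) / 2) /
        ((fderiv ℝ φ z₀ 1 - Complex.I * fderiv ℝ φ z₀ Complex.I) / 2) =
      (-(d : ℂ) ^ 2 + 2 * Complex.I * (d : ℂ)) / (4 + (d : ℂ) ^ 2) ∧
    (LinearMap.toMatrix Complex.basisOneI Complex.basisOneI
          ((fderiv ℝ φ z₀ : ℂ →L[ℝ] ℂ) : ℂ →ₗ[ℝ] ℂ)) *
        !![1 + d ^ 2, -d; -d, 1] *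
        (LinearMap.toMatrix Complex.basisOneI Complex.basisOneI
          ((fderiv ℝ φ z₀ : ℂ →L[ℝ] ℂ) : ℂ →ₗ[ℝ] ℂ))ᵀ =
      (1 : Matrix (Fin 2) (Fin 2) ℝ) := by
  intro z₀
  -- φ z = z + ofReal (f z.im)
  have hφ' : φ = fun z : ℂ => z + ((f z.im : ℝ) : ℂ) := by
    funext z
    rw [hφ z]
    simp [Complex.ext_iff]
  have him : z₀.im = y₀ := by simp [z₀]
  set L : ℂ →L[ℝ] ℂ :=
    ContinuousLinearMap.id ℝ ℂ +
      Complex.ofRealCLM.comp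
        (((1 : ℝ →L[ℝ] ℝ).smulRight d).comp Complex.imCLM) with hL
  have hLapp : ∀ v : ℂ, L v = v + ((v.im * d : ℝ) : ℂ) := by
    intro v; simp [hL, ContinuousLinearMap.smulRight_apply, smul_eq_mul]
  have hder : HasFDerivAt φ L z₀ := by
    rw [hφ']
    have h1 : HasFDerivAt (fun z : ℂ => ((f z.im : ℝ) : ℂ))
        (Complex.ofRealCLM.comp (((1 : ℝ →L[ℝ] ℝ).smulRight d).comp Complex.imCLM)) z₀ := by
      apply Complex.ofRealCLM.hasFDerivAt.comp
      have hf' : HasFDerivAt f ((1 : ℝ →L[ℝ] ℝ).smulRight d) z₀.im := by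
        rw [him]; exact hf.hasFDerivAt
      exact hf'.comp z₀ Complex.imCLM.hasFDerivAt
    exact (hasFDerivAt_id z₀).add h1
  have hfd : fderiv ℝ φ z₀ = L := hder.fderiv
  have hL1 : L 1 = 1 := by simp [hLapp]
  have hLI : L Complex.I = (d : ℂ) + Complex.I := by
    rw [hLapp]; simp; ring
  have hd2 : (2 : ℂ) - Complex.I * d ≠ 0 := by
    intro h
    have := congrArg Complex.re h
    simp at this
  have hd4 : (4 : ℂ) + (d : ℂ) ^ 2 ≠ 0 := by
    intro h
    have h2 : ((4 + d ^ 2 : ℝ) : ℂ) = 0 := by push_cast; exact h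
    have h3 : (4 : ℝ) + d ^ 2 = 0 := by exact_mod_cast h2
    nlinarith [sq_nonneg d]
  have hM : (LinearMap.toMatrix Complex.basisOneI Complex.basisOneI
      ((L : ℂ →L[ℝ] ℂ) : ℂ →ₗ[ℝ] ℂ)) = !![1, d; 0, 1] := by
    ext i j
    fin_cases i <;> fin_cases j <;>
      simp [LinearMap.toMatrix_apply, Complex.coe_basisOneI, Complex.coe_basisOneI_repr,
        hL1, hLI]
  refine ⟨hder.differentiableAt, ?_, ?_, ?_, ?_, ?_⟩
  · rw [hfd, ← LinearMap.det_toMatrix Complex.basisOneI, hM, Matrix.det_fin_two_of]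
    ring
  · rw [hfd, hL1, hLI]; push_cast
    linear_combination (-1/2 : ℂ) * Complex.I_sq
  · rw [hfd, hL1, hLI]; push_cast
    linear_combination (1/2 : ℂ) * Complex.I_sq
  · rw [hfd, hL1, hLI]
    have h1 : (1 : ℂ) + Complex.I * ((d : ℂ) + Complex.I) = Complex.I * d := by
      linear_combination Complex.I_sq
    have h2 : (1 : ℂ) - Complex.I * ((d : ℂ) + Complex.I) = 2 - Complex.I * d := by
      linear_combination -Complex.I_sq
    rw [h1, h2]
    have h3 : ((2 : ℂ) - Complex.I * d) / 2 ≠ 0 := by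
      simpa using hd2
    field_simp
    linear_combination (2 * (d:ℂ)^2) * Complex.I_sq
  · rw [hfd, hM]
    have hT : (!![1, d; 0, 1] : Matrix (Fin 2) (Fin 2) ℝ)ᵀ = !![1, 0; d, 1] := by
      ext i j; fin_cases i <;> fin_cases j <;> simp
    rw [hT]
    ext i j
    fin_cases i <;> fin_cases j <;>
      simp [Matrix.mul_apply, Fin.sum_univ_two, Matrix.one_apply, Matrix.transpose_apply] <;>
      ring
end
end
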